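/- Let γ : S¹ → ℂ* be a smooth embedded loop and define T_γ = {(z_1, z_2) ∈ ℂ² : z_1 z_2 ∈ γ(S¹), |z_1| = |z_2|}. Then T_γ is a smooth Lagrangian torus in (ℂ², ω_std). -/

import Mathlib

/-! Chekanov-type construction in `ℂ²`: for a smooth embedded loop
`γ : S¹ → ℂ*` (modeled as a 1-periodic smooth immersion `ℝ → ℂ*`, injective on
a period), the set `T_γ = {(z₁, z₂) : z₁ z₂ ∈ γ(S¹), |z₁| = |z₂|}` is a smooth
Lagrangian torus in `(ℂ², ω_std)`: the standard symplectic form vanishes on its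
tangent vectors (velocities of curves in `T_γ`), and `T_γ` is homeomorphic to
the 2-torus. -/

open Complex

/-- The standard symplectic form `dx₁∧dy₁ + dx₂∧dy₂` on `ℂ²`. -/
noncomputable def omegaStd (v w : ℂ × ℂ) : ℝ :=
  ((starRingEnd ℂ) v.1 * w.1).im + ((starRingEnd ℂ) v.2 * w.2).im

/-- The Chekanov-type torus over the loop `γ`. -/
def chekanovTorus (γ : ℝ → ℂ) : Set (ℂ × ℂ) :=
  {p | (∃ t, p.1 * p.2 = γ t) ∧ ‖p.1‖ = ‖p.2‖}


open Filter Topology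


lemma per_int {γ : ℝ → ℂ} (hper : Function.Periodic γ 1) (u : ℝ) (n : ℤ) :
    γ (u - n) = γ u := by
  simpa using hper.sub_int_mul_eq (x := u) n

lemma mod_inj {γ : ℝ → ℂ} (hper : Function.Periodic γ 1)
    (hinj : Set.InjOn γ (Set.Ico 0 1)) {u v : ℝ} (h : γ u = γ v) :
    ∃ n : ℤ, v = u + n := by
  have hu : γ (Int.fract u) = γ u := by
    rw [Int.fract]; simpa using per_int hper u ⌊u⌋
  have hv : γ (Int.fract v) = γ v := by
    rw [Int.fract]; simpa using per_int hper v ⌊v⌋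
  have : Int.fract u = Int.fract v := by
    apply hinj ⟨Int.fract_nonneg u, Int.fract_lt_one u⟩ ⟨Int.fract_nonneg v, Int.fract_lt_one v⟩
    rw [hu, hv, h]
  refine ⟨⌊v⌋ - ⌊u⌋, ?_⟩
  have := congrArg (fun x : ℝ => x) this
  simp only [Int.fract] at this
  push_cast
  linarith

/-- Embedding continuity: points of the image close to `γ t₀` have parameters close to `t₀`. -/
lemma param_close {γ : ℝ → ℂ} (hper : Function.Periodic γ 1) (hcont : Continuous γ)
    (hinj : Set.InjOn γ (Set.Ico 0 1)) (t₀ : ℝ) {ε : ℝ} (hε : 0 < ε) (hε2 : ε ≤ 1/2) :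
    ∃ δ > 0, ∀ u, dist (γ u) (γ t₀) < δ → ∃ u', γ u' = γ u ∧ |u' - t₀| < ε := by
  set S : Set ℝ := Set.Icc (t₀ - 1/2) (t₀ + 1/2) ∩ {x | ε ≤ |x - t₀|} with hS
  have hScpt : IsCompact S := (isCompact_Icc).inter_right
    (isClosed_le continuous_const ((continuous_id.sub continuous_const).abs))
  have hKcl : IsClosed (γ '' S) := (hScpt.image hcont).isClosed
  have hnotmem : γ t₀ ∉ γ '' S := by
    rintro ⟨x, ⟨⟨hx1, hx2⟩, hx3⟩, hx4⟩
    obtain ⟨n, hn⟩ := mod_inj hper hinj hx4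
    have hxt : x = t₀ - n := by linarith [hn]
    rcases lt_trichotomy n 0 with h | h | h
    · have : (1:ℝ) ≤ |(n:ℝ)| := by exact_mod_cast Int.one_le_abs (by omega)
      rw [hxt] at hx1 hx2
      rcases abs_cases (n:ℝ) with ⟨h1,h2⟩|⟨h1,h2⟩ <;> linarith
    · subst h; simp at hxt; rw [hxt] at hx3; simp at hx3; linarith
    · have : (1:ℝ) ≤ |(n:ℝ)| := by exact_mod_cast Int.one_le_abs (by omega)
      rw [hxt] at hx1 hx2
      rcases abs_cases (n:ℝ) with ⟨h1,h2⟩|⟨h1,h2⟩ <;> linarith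
  have : (γ '' S)ᶜ ∈ 𝓝 (γ t₀) := hKcl.isOpen_compl.mem_nhds hnotmem
  obtain ⟨δ, hδ, hball⟩ := Metric.mem_nhds_iff.mp this
  refine ⟨δ, hδ, fun u hu => ?_⟩
  set u' : ℝ := u - round (u - t₀) with hu'
  have hgu : γ u' = γ u := by
    have : u' = u - (round (u - t₀) : ℤ) := by push_cast [hu']; ring
    rw [this, per_int hper]
  have hdist : |u' - t₀| ≤ 1/2 := by
    have := abs_sub_round (u - t₀)
    have : |u - t₀ - round (u - t₀)| ≤ 1/2 := this
    calc |u' - t₀| = |u - t₀ - round (u - t₀)| := by rw [hu']; ring_nf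
    _ ≤ 1/2 := this
  refine ⟨u', hgu, ?_⟩
  by_contra hcon
  push_neg at hcon
  obtain ⟨h1, h2⟩ := abs_le.mp hdist
  have hmem : γ u' ∈ γ '' S := ⟨u', ⟨⟨by linarith, by linarith⟩, hcon⟩, rfl⟩
  exact hball (by rw [hgu]; exact hu) hmem

lemma tangent_line {γ : ℝ → ℂ} (hper : Function.Periodic γ 1) (hsm : ContDiff ℝ (⊤ : ℕ∞) γ)
    (hinj : Set.InjOn γ (Set.Ico 0 1)) (himm : ∀ t, deriv γ t ≠ 0)
    {g : ℝ → ℂ} {v : ℂ} {t₀ : ℝ} (hg : HasDerivAt g v 0)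
    (hmem : ∀ s, ∃ t, g s = γ t) (h0 : g 0 = γ t₀) :
    ∃ a : ℝ, v = a • deriv γ t₀ := by
  set δ := deriv γ t₀ with hδdef
  have hδ : δ ≠ 0 := himm t₀
  have hγs : HasStrictDerivAt γ δ t₀ := hsm.hasStrictDerivAt (by simp)
  set h : ℝ → ℝ := fun t => (γ t * (starRingEnd ℂ) δ).re with hhdef
  have hmul : HasStrictDerivAt (fun t => γ t * (starRingEnd ℂ) δ) (δ * (starRingEnd ℂ) δ) t₀ :=
    hγs.mul_const _
  have hh : HasStrictDerivAt h (Complex.normSq δ) t₀ := by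
    have := HasStrictFDerivAt.comp_hasStrictDerivAt t₀
      (Complex.reCLM.hasStrictFDerivAt) hmul
    simpa [hhdef, Function.comp_def, Complex.mul_conj] using this
  have hne' : Complex.normSq δ ≠ 0 := by
    simpa [Complex.normSq_eq_zero] using hδ
  set linv := HasStrictDerivAt.localInverse h (Complex.normSq δ) t₀ hh hne' with hlinvdef
  have hlinv : HasStrictDerivAt linv (Complex.normSq δ)⁻¹ (h t₀) := hh.to_localInverse hne'
  have hleft : ∀ᶠ x in 𝓝 t₀, linv (h x) = x :=
    (hh.hasStrictFDerivAt_equiv hne').eventually_left_inverse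
  have hlinv0 : linv (h t₀) = t₀ :=
    (hh.hasStrictFDerivAt_equiv hne').localInverse_apply_image
  set k : ℝ → ℝ := fun s => (g s * (starRingEnd ℂ) δ).re with hkdef
  have hk : HasDerivAt k ((v * (starRingEnd ℂ) δ).re) 0 := by
    have := HasFDerivAt.comp_hasDerivAt 0
      (Complex.reCLM.hasFDerivAt) (hg.mul_const ((starRingEnd ℂ) δ))
    simpa [hkdef, Function.comp_def] using this
  have hk0 : k 0 = h t₀ := by simp [hkdef, hhdef, h0]
  set τ : ℝ → ℝ := fun s => linv (k s) with hτdef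
  have hτ : HasDerivAt τ ((Complex.normSq δ)⁻¹ * (v * (starRingEnd ℂ) δ).re) 0 := by
    have h1 : HasDerivAt linv (Complex.normSq δ)⁻¹ (k 0) := hk0 ▸ hlinv.hasDerivAt
    exact h1.comp 0 hk
  have hτ0 : τ 0 = t₀ := by rw [hτdef]; simp only [hk0]; exact hlinv0
  -- eventual equality γ ∘ τ = g near 0
  obtain ⟨ε, hε, hleft'⟩ := Metric.eventually_nhds_iff.mp hleft
  set ε' := min ε (1/2) with hε'def
  have hε'pos : 0 < ε' := lt_min hε (by norm_num)
  obtain ⟨δ₂, hδ₂, hpc⟩ := param_close hper hsm.continuous hinj t₀ hε'pos (min_le_right _ _)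
  have hgev : ∀ᶠ s in 𝓝 (0:ℝ), dist (g s) (γ t₀) < δ₂ := by
    have : Tendsto g (𝓝 0) (𝓝 (γ t₀)) := h0 ▸ hg.continuousAt.tendsto
    exact this (Metric.ball_mem_nhds _ hδ₂)
  have heq : ∀ᶠ s in 𝓝 (0:ℝ), γ (τ s) = g s := by
    filter_upwards [hgev] with s hs
    obtain ⟨t, ht⟩ := hmem s
    obtain ⟨u', hu', hu'close⟩ := hpc t (by rw [← ht]; exact hs)
    have hgu' : γ u' = g s := by rw [hu', ht]
    have hlu' : linv (h u') = u' := by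
      apply hleft'
      rw [Real.dist_eq]
      exact lt_of_lt_of_le hu'close (min_le_left _ _)
    have : h u' = k s := by simp [hhdef, hkdef, hgu']
    rw [hτdef]
    simp only [← this, hlu', hgu']
  have hγτ : HasDerivAt (fun s => γ (τ s))
      (((Complex.normSq δ)⁻¹ * (v * (starRingEnd ℂ) δ).re) • δ) 0 := by
    have hγd : HasDerivAt γ δ (τ 0) := hτ0 ▸ hγs.hasDerivAt
    exact hγd.scomp 0 hτ
  have hgv : HasDerivAt g (((Complex.normSq δ)⁻¹ * (v * (starRingEnd ℂ) δ).re) • δ) 0 :=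
    hγτ.congr_of_eventuallyEq (heq.mono fun s hs => hs.symm)
  exact ⟨_, (hg.unique hgv)⟩

lemma omega_algebra {z₁ z₂ v₁ v₂ w₁ w₂ δ : ℂ} {s s' : ℝ}
    (hz₁ : z₁ ≠ 0) (hz₂ : z₂ ≠ 0) (habs : ‖z₁‖ = ‖z₂‖)
    (hC1v : ((starRingEnd ℂ) z₁ * v₁).re = ((starRingEnd ℂ) z₂ * v₂).re)
    (hC1w : ((starRingEnd ℂ) z₁ * w₁).re = ((starRingEnd ℂ) z₂ * w₂).re)
    (hC2v : v₁ * z₂ + z₁ * v₂ = (s : ℂ) * δ)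
    (hC2w : w₁ * z₂ + z₁ * w₂ = (s' : ℂ) * δ) :
    ((starRingEnd ℂ) v₁ * w₁).im + ((starRingEnd ℂ) v₂ * w₂).im = 0 := by
  set a := v₁ / z₁ with ha
  set b := v₂ / z₂ with hb
  set a' := w₁ / z₁ with ha'
  set b' := w₂ / z₂ with hb'
  set q := δ / (z₁ * z₂) with hq
  have hn : Complex.normSq z₁ = Complex.normSq z₂ := by
    rw [← Complex.sq_norm, ← Complex.sq_norm, habs]
  have hnpos : 0 < Complex.normSq z₁ := Complex.normSq_pos.mpr hz₁
  have hv₁ : v₁ = z₁ * a := by rw [ha]; field_simp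
  have hv₂ : v₂ = z₂ * b := by rw [hb]; field_simp
  have hw₁ : w₁ = z₁ * a' := by rw [ha']; field_simp
  have hw₂ : w₂ = z₂ * b' := by rw [hb']; field_simp
  have hδq : δ = z₁ * z₂ * q := by rw [hq]; field_simp
  -- rewrite constraints
  have hra : Complex.normSq z₁ * a.re = Complex.normSq z₂ * b.re := by
    have h1 : (starRingEnd ℂ) z₁ * v₁ = (Complex.normSq z₁ : ℂ) * a := by
      rw [hv₁, ← mul_assoc, mul_comm ((starRingEnd ℂ) z₁) z₁, Complex.mul_conj]
    have h2 : (starRingEnd ℂ) z₂ * v₂ = (Complex.normSq z₂ : ℂ) * b := by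
      rw [hv₂, ← mul_assoc, mul_comm ((starRingEnd ℂ) z₂) z₂, Complex.mul_conj]
    simpa [h1, h2] using hC1v
  have hra' : Complex.normSq z₁ * a'.re = Complex.normSq z₂ * b'.re := by
    have h1 : (starRingEnd ℂ) z₁ * w₁ = (Complex.normSq z₁ : ℂ) * a' := by
      rw [hw₁, ← mul_assoc, mul_comm ((starRingEnd ℂ) z₁) z₁, Complex.mul_conj]
    have h2 : (starRingEnd ℂ) z₂ * w₂ = (Complex.normSq z₂ : ℂ) * b' := by
      rw [hw₂, ← mul_assoc, mul_comm ((starRingEnd ℂ) z₂) z₂, Complex.mul_conj]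
    simpa [h1, h2] using hC1w
  have hab : a.re = b.re := by
    rw [← hn] at hra; exact mul_left_cancel₀ (ne_of_gt hnpos) hra
  have hab' : a'.re = b'.re := by
    rw [← hn] at hra'; exact mul_left_cancel₀ (ne_of_gt hnpos) hra'
  have he1 : a + b = (s : ℂ) * q := by
    rw [ha, hb, hq, div_add_div _ _ hz₁ hz₂, hC2v, mul_div_assoc]
  have he2 : a' + b' = (s' : ℂ) * q := by
    rw [ha', hb', hq, div_add_div _ _ hz₁ hz₂, hC2w, mul_div_assoc]
  -- reduce goal
  have hg1 : (starRingEnd ℂ) v₁ * w₁ = (Complex.normSq z₁ : ℂ) * ((starRingEnd ℂ) a * a') := by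
    rw [hv₁, hw₁]; rw [map_mul, ← Complex.mul_conj]; ring
  have hg2 : (starRingEnd ℂ) v₂ * w₂ = (Complex.normSq z₂ : ℂ) * ((starRingEnd ℂ) b * b') := by
    rw [hv₂, hw₂]; rw [map_mul, ← Complex.mul_conj]; ring
  have e1re : a.re + b.re = s * q.re := by
    have := congrArg Complex.re he1; simpa using this
  have e1im : a.im + b.im = s * q.im := by
    have := congrArg Complex.im he1; simpa using this
  have e2re : a'.re + b'.re = s' * q.re := by
    have := congrArg Complex.re he2; simpa using this
  have e2im : a'.im + b'.im = s' * q.im := by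
    have := congrArg Complex.im he2; simpa using this
  have him : ∀ (n : ℝ) (w : ℂ), ((n : ℂ) * w).im = n * w.im := fun n w => by
    simp
  rw [hg1, hg2, ← hn, him, him]
  have hinner : ((starRingEnd ℂ) a * a').im + ((starRingEnd ℂ) b * b').im = 0 := by
    simp only [Complex.mul_im, Complex.conj_re, Complex.conj_im]
    linear_combination a.re * e2im - a'.re * e1im + (s' * q.im / 2) * e1re
      + (s' * q.im / 2) * hab - (s * q.im / 2) * e2re - (s * q.im / 2) * hab'
      - b'.im * hab + b.im * hab'
  rw [← mul_add, hinner, mul_zero]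


lemma curve_constraints {γ : ℝ → ℂ} (hper : Function.Periodic γ 1) (hsm : ContDiff ℝ (⊤ : ℕ∞) γ)
    (hinj : Set.InjOn γ (Set.Ico 0 1)) (himm : ∀ t, deriv γ t ≠ 0)
    {c : ℝ → ℂ × ℂ} {v : ℂ × ℂ} {p : ℂ × ℂ} {t₀ : ℝ}
    (hc : ∀ s, c s ∈ chekanovTorus γ) (hc0 : c 0 = p) (hcv : HasDerivAt c v 0)
    (hpt : p.1 * p.2 = γ t₀) :
    ((starRingEnd ℂ) p.1 * v.1).re = ((starRingEnd ℂ) p.2 * v.2).re ∧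
    ∃ a : ℝ, v.1 * p.2 + p.1 * v.2 = (a : ℂ) * deriv γ t₀ := by
  have hc1 : HasDerivAt (fun s => (c s).1) v.1 0 := by
    have := (ContinuousLinearMap.fst ℝ ℂ ℂ).hasFDerivAt.comp_hasDerivAt 0 hcv
    simpa [Function.comp_def] using this
  have hc2 : HasDerivAt (fun s => (c s).2) v.2 0 := by
    have := (ContinuousLinearMap.snd ℝ ℂ ℂ).hasFDerivAt.comp_hasDerivAt 0 hcv
    simpa [Function.comp_def] using this
  have hconj1 : HasDerivAt (fun s => (starRingEnd ℂ) ((c s).1)) ((starRingEnd ℂ) v.1) 0 := by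
    have := (Complex.conjCLE.toContinuousLinearMap).hasFDerivAt.comp_hasDerivAt 0 hc1
    simpa [Function.comp_def] using this
  have hconj2 : HasDerivAt (fun s => (starRingEnd ℂ) ((c s).2)) ((starRingEnd ℂ) v.2) 0 := by
    have := (Complex.conjCLE.toContinuousLinearMap).hasFDerivAt.comp_hasDerivAt 0 hc2
    simpa [Function.comp_def] using this
  constructor
  · -- differentiate |c₁|² - |c₂|² ≡ 0
    have hm1 : HasDerivAt (fun s => (starRingEnd ℂ) ((c s).1) * (c s).1)
        ((starRingEnd ℂ) v.1 * (c 0).1 + (starRingEnd ℂ) ((c 0).1) * v.1) 0 := hconj1.mul hc1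
    have hm2 : HasDerivAt (fun s => (starRingEnd ℂ) ((c s).2) * (c s).2)
        ((starRingEnd ℂ) v.2 * (c 0).2 + (starRingEnd ℂ) ((c 0).2) * v.2) 0 := hconj2.mul hc2
    have hN : HasDerivAt
        (fun s => ((starRingEnd ℂ) ((c s).1) * (c s).1).re
          - ((starRingEnd ℂ) ((c s).2) * (c s).2).re)
        ((((starRingEnd ℂ) v.1 * (c 0).1 + (starRingEnd ℂ) ((c 0).1) * v.1)).re
          - (((starRingEnd ℂ) v.2 * (c 0).2 + (starRingEnd ℂ) ((c 0).2) * v.2)).re) 0 := by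
      have h1 := Complex.reCLM.hasFDerivAt.comp_hasDerivAt 0 hm1
      have h2 := Complex.reCLM.hasFDerivAt.comp_hasDerivAt 0 hm2
      exact HasDerivAt.sub h1 h2
    have hzero : (fun s => ((starRingEnd ℂ) ((c s).1) * (c s).1).re
          - ((starRingEnd ℂ) ((c s).2) * (c s).2).re) = fun _ => (0:ℝ) := by
      funext s
      have habs := (hc s).2
      have : Complex.normSq ((c s).1) = Complex.normSq ((c s).2) := by
        rw [← Complex.sq_norm, ← Complex.sq_norm, habs]
      simp [mul_comm, Complex.mul_conj, this]
    have hD : (((starRingEnd ℂ) v.1 * (c 0).1 + (starRingEnd ℂ) ((c 0).1) * v.1)).re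
          - (((starRingEnd ℂ) v.2 * (c 0).2 + (starRingEnd ℂ) ((c 0).2) * v.2)).re = 0 := by
      have h0 : HasDerivAt (fun _ : ℝ => (0:ℝ)) 0 0 := hasDerivAt_const _ _
      rw [hzero] at hN
      exact hN.unique h0
    have key : ∀ z w : ℂ, ((starRingEnd ℂ) w * z + (starRingEnd ℂ) z * w).re
        = 2 * ((starRingEnd ℂ) z * w).re := by
      intro z w
      have : (starRingEnd ℂ) w * z = (starRingEnd ℂ) ((starRingEnd ℂ) z * w) := by
        simp [mul_comm]
      rw [Complex.add_re, this, Complex.conj_re]; ring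
    rw [key, key] at hD
    rw [hc0] at hD
    linarith
  · -- product curve has velocity tangent to γ
    have hgp : HasDerivAt (fun s => (c s).1 * (c s).2) (v.1 * (c 0).2 + (c 0).1 * v.2) 0 :=
      hc1.mul hc2
    rw [hc0] at hgp
    obtain ⟨a, ha⟩ := tangent_line hper hsm hinj himm hgp (fun s => (hc s).1) (by
      show (c 0).1 * (c 0).2 = γ t₀
      rw [hc0]; exact hpt)
    exact ⟨a, by rw [ha, Complex.real_smul]⟩

/-- Parametrization of the Chekanov torus. -/
noncomputable def chekPhi (γ : ℝ → ℂ) (t θ : ℝ) : ℂ × ℂ :=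
  ((Real.sqrt ‖γ t‖ : ℂ) * Complex.exp ((2 * Real.pi * θ : ℝ) * Complex.I),
   γ t / ((Real.sqrt ‖γ t‖ : ℂ) * Complex.exp ((2 * Real.pi * θ : ℝ) * Complex.I)))

lemma chekPhi_fst_abs {γ : ℝ → ℂ} (t θ : ℝ) :
    ‖(chekPhi γ t θ).1‖ = Real.sqrt ‖γ t‖ := by
  simp [chekPhi, Complex.norm_exp, Complex.norm_of_nonneg (Real.sqrt_nonneg _)]

lemma chekPhi_fst_ne {γ : ℝ → ℂ} (hne : ∀ t, γ t ≠ 0) (t θ : ℝ) :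
    (chekPhi γ t θ).1 ≠ 0 := by
  simp only [chekPhi]
  apply mul_ne_zero
  · simp only [ne_eq, Complex.ofReal_eq_zero]
    intro h
    have h2 : ‖γ t‖ ≤ 0 := Real.sqrt_eq_zero'.mp h
    exact hne t (by simpa using le_antisymm h2 (norm_nonneg _))
  · exact Complex.exp_ne_zero _

lemma chekPhi_mul {γ : ℝ → ℂ} (hne : ∀ t, γ t ≠ 0) (t θ : ℝ) :
    (chekPhi γ t θ).1 * (chekPhi γ t θ).2 = γ t := by
  have h := chekPhi_fst_ne hne t θ
  simp only [chekPhi] at h ⊢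
  rw [mul_div_assoc']
  exact mul_div_cancel_left₀ _ (by exact_mod_cast h)

lemma chekPhi_mem {γ : ℝ → ℂ} (hne : ∀ t, γ t ≠ 0) (t θ : ℝ) :
    chekPhi γ t θ ∈ chekanovTorus γ := by
  refine ⟨⟨t, chekPhi_mul hne t θ⟩, ?_⟩
  have h1 := chekPhi_fst_abs (γ := γ) t θ
  have h2 : ‖(chekPhi γ t θ).2‖
      = ‖γ t‖ / Real.sqrt ‖γ t‖ := by
    simp only [chekPhi, norm_div, norm_mul, Complex.norm_exp]
    simp [Complex.norm_of_nonneg (Real.sqrt_nonneg _), abs_of_nonneg (Real.sqrt_nonneg _), Real.div_sqrt]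
  rw [h1, h2]
  rw [Real.div_sqrt]

lemma chekPhi_periodic {γ : ℝ → ℂ} (hper : Function.Periodic γ 1) (t θ : ℝ) (n m : ℤ) :
    chekPhi γ (t + n) (θ + m) = chekPhi γ t θ := by
  have hγ : γ (t + n) = γ t := by
    have := per_int hper (t + n) n; simpa using this.symm
  have hexp : Complex.exp ((2 * Real.pi * (θ + m) : ℝ) * Complex.I)
      = Complex.exp ((2 * Real.pi * θ : ℝ) * Complex.I) := by
    have : ((2 * Real.pi * (θ + m) : ℝ) : ℂ) * Complex.I
        = (2 * Real.pi * θ : ℝ) * Complex.I + m * (2 * Real.pi * Complex.I) := by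
      push_cast; ring
    rw [this, Complex.exp_add, Complex.exp_int_mul_two_pi_mul_I, mul_one]
  simp only [chekPhi, hγ, hexp]

lemma chekPhi_continuous {γ : ℝ → ℂ} (hcont : Continuous γ) (hne : ∀ t, γ t ≠ 0) :
    Continuous (fun x : ℝ × ℝ => chekPhi γ x.1 x.2) := by
  have h1 : Continuous (fun x : ℝ × ℝ =>
      (Real.sqrt ‖γ x.1‖ : ℂ)
        * Complex.exp ((2 * Real.pi * x.2 : ℝ) * Complex.I)) := by
    apply Continuous.mul
    · exact Complex.continuous_ofReal.comp
        (Real.continuous_sqrt.comp (continuous_norm.comp (hcont.comp continuous_fst)))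
    · exact Complex.continuous_exp.comp
        ((Complex.continuous_ofReal.comp
          ((continuous_const.mul continuous_snd))).mul continuous_const)
  exact Continuous.prodMk h1 ((hcont.comp continuous_fst).div h1
    (fun x => chekPhi_fst_ne hne x.1 x.2))

lemma chekPhi_inj {γ : ℝ → ℂ} (hper : Function.Periodic γ 1)
    (hne : ∀ t, γ t ≠ 0) (hinj : Set.InjOn γ (Set.Ico 0 1)) {t θ t' θ' : ℝ}
    (h : chekPhi γ t θ = chekPhi γ t' θ') :
    (∃ n : ℤ, t' = t + n) ∧ (∃ m : ℤ, θ' = θ + m) := by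
  have hprod : γ t = γ t' := by
    rw [← chekPhi_mul hne t θ, ← chekPhi_mul hne t' θ', h]
  refine ⟨mod_inj hper hinj hprod, ?_⟩
  have h1 := congrArg Prod.fst h
  simp only [chekPhi, hprod] at h1
  have hs : ((Real.sqrt ‖γ t'‖ : ℝ) : ℂ) ≠ 0 := by
    have := chekPhi_fst_ne hne t' θ'
    simp only [chekPhi] at this
    exact fun hh => this (by rw [hh, zero_mul])
  have hexp : Complex.exp ((2 * Real.pi * θ : ℝ) * Complex.I)
      = Complex.exp ((2 * Real.pi * θ' : ℝ) * Complex.I) := mul_left_cancel₀ hs h1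
  obtain ⟨m, hm⟩ := Complex.exp_eq_exp_iff_exists_int.mp hexp
  have him := congrArg Complex.im hm
  push_cast at him
  simp at him
  refine ⟨-m, ?_⟩
  have hπ : (0:ℝ) < 2 * Real.pi := by positivity
  push_cast
  nlinarith [him]

lemma chekPhi_surj {γ : ℝ → ℂ} (hne : ∀ t, γ t ≠ 0) {p : ℂ × ℂ}
    (hp : p ∈ chekanovTorus γ) :
    ∃ t θ : ℝ, chekPhi γ t θ = p := by
  obtain ⟨⟨t, hpt⟩, habs⟩ := hp
  have hz : p.1 * p.2 ≠ 0 := by rw [hpt]; exact hne t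
  have hz₁ : p.1 ≠ 0 := fun h => hz (by rw [h, zero_mul])
  have habs1 : ‖p.1‖ ^ 2 = ‖γ t‖ := by
    rw [← hpt, norm_mul, ← habs]; ring
  have hsqrt : Real.sqrt ‖γ t‖ = ‖p.1‖ := by
    rw [← habs1, Real.sqrt_sq (norm_nonneg _)]
  refine ⟨t, p.1.arg / (2 * Real.pi), ?_⟩
  have harg : (2 * Real.pi * (p.1.arg / (2 * Real.pi)) : ℝ) = p.1.arg := by
    field_simp
  have hfst : (chekPhi γ t (p.1.arg / (2 * Real.pi))).1 = p.1 := by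
    simp only [chekPhi, harg, hsqrt]
    exact Complex.norm_mul_exp_arg_mul_I p.1
  have hmul := chekPhi_mul hne t (p.1.arg / (2 * Real.pi))
  refine Prod.ext hfst ?_
  have : p.1 * (chekPhi γ t (p.1.arg / (2 * Real.pi))).2 = p.1 * p.2 :=
    calc p.1 * (chekPhi γ t (p.1.arg / (2 * Real.pi))).2
        = (chekPhi γ t (p.1.arg / (2 * Real.pi))).1
          * (chekPhi γ t (p.1.arg / (2 * Real.pi))).2 := by rw [hfst]
      _ = γ t := hmul
      _ = p.1 * p.2 := hpt.symm
  exact mul_left_cancel₀ hz₁ this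

lemma chek_homeo {γ : ℝ → ℂ} (hper : Function.Periodic γ 1) (hcont : Continuous γ)
    (hne : ∀ t, γ t ≠ 0) (hinj : Set.InjOn γ (Set.Ico 0 1)) :
    Nonempty ((chekanovTorus γ) ≃ₜ (AddCircle (1 : ℝ) × AddCircle (1 : ℝ))) := by
  haveI : Fact ((0:ℝ) < 1) := ⟨one_pos⟩
  set f : ℝ → ℝ → (chekanovTorus γ) :=
    fun t θ => ⟨chekPhi γ t θ, chekPhi_mem hne t θ⟩ with hf
  have hwd : ∀ (a₁ a₂ b₁ b₂ : ℝ),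
      (QuotientAddGroup.leftRel (AddSubgroup.zmultiples (1:ℝ))) a₁ b₁ →
      (QuotientAddGroup.leftRel (AddSubgroup.zmultiples (1:ℝ))) a₂ b₂ →
      f a₁ a₂ = f b₁ b₂ := by
    intro t θ t' θ' h₁ h₂
    rw [QuotientAddGroup.leftRel_apply] at h₁ h₂
    obtain ⟨n, hn⟩ := AddSubgroup.mem_zmultiples_iff.mp h₁
    obtain ⟨m, hm⟩ := AddSubgroup.mem_zmultiples_iff.mp h₂
    rw [zsmul_eq_mul, mul_one] at hn hm
    have ht' : t' = t + n := by linarith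
    have hθ' : θ' = θ + m := by linarith
    subst ht' hθ'
    exact Subtype.ext (chekPhi_periodic hper t θ n m).symm
  set F : AddCircle (1:ℝ) × AddCircle (1:ℝ) → (chekanovTorus γ) :=
    fun x => Quotient.liftOn₂' x.1 x.2 f hwd with hF
  have hq : IsOpenQuotientMap (Prod.map (QuotientAddGroup.mk : ℝ → AddCircle (1:ℝ))
      (QuotientAddGroup.mk : ℝ → AddCircle (1:ℝ))) :=
    QuotientAddGroup.isOpenQuotientMap_mk.prodMap QuotientAddGroup.isOpenQuotientMap_mk
  have hFcont : Continuous F := by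
    rw [hq.isQuotientMap.continuous_iff]
    have heq : (F ∘ Prod.map (QuotientAddGroup.mk : ℝ → AddCircle (1:ℝ))
        (QuotientAddGroup.mk : ℝ → AddCircle (1:ℝ))) = fun x : ℝ × ℝ => f x.1 x.2 := rfl
    rw [heq]
    exact (chekPhi_continuous hcont hne).subtype_mk _
  have hbij : Function.Bijective F := by
    constructor
    · rintro ⟨x1, x2⟩ ⟨y1, y2⟩ hxy
      obtain ⟨t, rfl⟩ := QuotientAddGroup.mk_surjective x1
      obtain ⟨θ, rfl⟩ := QuotientAddGroup.mk_surjective x2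
      obtain ⟨t', rfl⟩ := QuotientAddGroup.mk_surjective y1
      obtain ⟨θ', rfl⟩ := QuotientAddGroup.mk_surjective y2
      have h : chekPhi γ t θ = chekPhi γ t' θ' := Subtype.ext_iff.mp hxy
      obtain ⟨⟨n, hn⟩, ⟨m, hm⟩⟩ := chekPhi_inj hper hne hinj h
      refine Prod.ext ?_ ?_
      · exact (QuotientAddGroup.eq).mpr (AddSubgroup.mem_zmultiples_iff.mpr
          ⟨n, by rw [zsmul_eq_mul, mul_one, hn]; ring⟩)
      · exact (QuotientAddGroup.eq).mpr (AddSubgroup.mem_zmultiples_iff.mpr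
          ⟨m, by rw [zsmul_eq_mul, mul_one, hm]; ring⟩)
    · rintro ⟨p, hp⟩
      obtain ⟨t, θ, h⟩ := chekPhi_surj hne hp
      exact ⟨((t : AddCircle (1:ℝ)), (θ : AddCircle (1:ℝ))), Subtype.ext h⟩
  have hcont' : Continuous (Equiv.ofBijective F hbij) := hFcont
  exact ⟨(hcont'.homeoOfEquivCompactToT2).symm⟩

theorem chekanov_torus_is_lagrangian_torus
    (γ : ℝ → ℂ) (hper : Function.Periodic γ 1) (hsm : ContDiff ℝ (⊤ : ℕ∞) γ)
    (hne : ∀ t, γ t ≠ 0) (hinj : Set.InjOn γ (Set.Ico 0 1))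
    (himm : ∀ t, deriv γ t ≠ 0) :
    -- `T_γ` is Lagrangian: `ω_std` vanishes on its tangent vectors …
    (∀ p ∈ chekanovTorus γ, ∀ v w : ℂ × ℂ,
      (∃ c : ℝ → ℂ × ℂ, (∀ s, c s ∈ chekanovTorus γ) ∧ c 0 = p ∧ HasDerivAt c v 0) →
      (∃ c : ℝ → ℂ × ℂ, (∀ s, c s ∈ chekanovTorus γ) ∧ c 0 = p ∧ HasDerivAt c w 0) →
      omegaStd v w = 0) ∧
    -- … and it is a (smooth, embedded) torus
    Nonempty (chekanovTorus γ ≃ₜ (AddCircle (1 : ℝ) × AddCircle (1 : ℝ))) := by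
  constructor
  · rintro p hp v w ⟨c, hc, hc0, hcv⟩ ⟨d, hd, hd0, hdv⟩
    obtain ⟨⟨t₀, hpt⟩, habs⟩ := hp
    have hz : p.1 * p.2 ≠ 0 := by rw [hpt]; exact hne t₀
    have hz₁ : p.1 ≠ 0 := fun h => hz (by rw [h, zero_mul])
    have hz₂ : p.2 ≠ 0 := fun h => hz (by rw [h, mul_zero])
    obtain ⟨hC1v, s, hC2v⟩ := curve_constraints hper hsm hinj himm hc hc0 hcv hpt
    obtain ⟨hC1w, s', hC2w⟩ := curve_constraints hper hsm hinj himm hd hd0 hdv hpt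
    exact omega_algebra hz₁ hz₂ habs hC1v hC1w hC2v hC2w
  · exact chek_homeo hper hsm.continuous hne hinj
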